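/- For a finite linear combination $T = \sum_{j,k} a_{jk} T_{jk}$, the $G$-norm satisfies the Parseval-type identity $\|T\|_G^2 = \sum_{j,k} |a_{jk}|^2$. -/

import Mathlib

open Filter Finset MeasureTheory
open scoped ENNReal

noncomputable section

/-- The index set `I = (0,1] ∩ ℚ`. -/
abbrev Iq : Type := {q : ℚ // 0 < q ∧ q ≤ 1}

/-- The Hilbert space `ℋ² = ⊕_{l ∈ I} H²[-π,π]`, realized via the orthonormal basis
`{e_{lk} : l ∈ I, k ∈ ℕ}` as `ℓ²(I × ℕ)`. -/
abbrev H2 : Type := lp (fun _ : Iq × ℕ => ℂ) 2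

/-- The basis vector `e_{lk}` of `ℋ²` (zero if `l ∉ (0,1]`). -/
def basisVec (l : ℚ) (k : ℕ) : H2 :=
  if h : 0 < l ∧ l ≤ 1 then lp.single 2 ((⟨l, h⟩ : Iq), k) (1 : ℂ) else 0

/-- Index set for `Bₙ = {e_{lr} : r = 0,…,⌊n/⌊√n⌋⌋-1, l ∈ I_{⌊√n⌋}}`:
pairs `(p, r)` with `1 ≤ p ≤ ⌊√n⌋` and `r < ⌊n/⌊√n⌋⌋`, where `l = p/⌊√n⌋`. -/
def Bfin (n : ℕ) : Finset (ℕ × ℕ) :=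
  (Finset.Icc 1 (Nat.sqrt n)) ×ˢ (Finset.range (n / Nat.sqrt n))

/-- The basis vector of `Bₙ` indexed by `(p, r)`, namely `e_{p/⌊√n⌋, r}`. -/
def bvec (n : ℕ) (pr : ℕ × ℕ) : H2 :=
  basisVec ((pr.1 : ℚ) / (Nat.sqrt n : ℚ)) pr.2

/-- `∑_{e ∈ C} ‖Te‖²` for a subset `C` of the index set of `Bₙ`. -/
def sumSq (T : H2 → H2) (n : ℕ) (C : Finset (ℕ × ℕ)) : ℝ :=
  ∑ pr ∈ C, ‖T (bvec n pr)‖ ^ 2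

/-- The seminorm `Q(T) = inf { limsup_n (1/√n)(∑_{e ∈ Cₙ} ‖Te‖²)^{1/2} }`, the infimum
over all decompositions `Bₙ = Cₙ ⊔ Dₙ` with `#Dₙ = o(n)`, valued in `ℝ≥0∞`. -/
def QQ (T : H2 → H2) : ℝ≥0∞ :=
  ⨅ (C : ℕ → Finset (ℕ × ℕ)) (_ : ∀ n, C n ⊆ Bfin n)
    (_ : Tendsto (fun n => ((Bfin n \ C n).card : ℝ) / n) atTop (nhds 0)),
    Filter.limsup (fun n => ENNReal.ofReal (Real.sqrt (sumSq T n (C n) / n))) atTop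

/-- `T` acts like the operator `T_{jk}`:
`T(e_{lr}) = e^{2πijl} e_{l,r+k}` when `r + k ≥ 0`, and `0` otherwise. -/
def IsTjk (T : H2 → H2) (j k : ℤ) : Prop :=
  ∀ (l : ℚ) (r : ℕ), T (basisVec l r) =
    if 0 ≤ (r : ℤ) + k then
      Complex.exp (2 * Real.pi * Complex.I * (j : ℂ) * (l : ℂ)) • basisVec l ((r : ℤ) + k).toNat
    else 0

/-!
Write `m = ⌊√n⌋`. Expanding `‖∑ aₓ Tₓ e‖²` reduces the sum over `Bₙ` to the Gram sums
`∑_{e ∈ Bₙ} ⟪Tₓ e, T_y e⟫`. For `x = (j, k)` and `y = (j', k')` the vectors `Tₓ e_{lr}` and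
`T_y e_{lr}` are orthogonal unless `k = k'`, and then their inner product is the phase
`e^{2πi(j'-j)l}`; over `l = p/m`, `p = 1, …, m`, these phases are the powers of an `m`-th root of
unity, which cancel once `m > |j' - j|`. So only the diagonal survives, and it counts the
`m (⌊n/m⌋ - max(0, -k)) = n + O(√n)` basis vectors of `Bₙ` that `Tₓ` does not kill.
-/

section

open Complex Real

theorem sum_Icc_pow_eq_zero {K : Type*} [DivisionRing K] {w : K} {m : ℕ} (hwm : w ^ m = 1)
    (hw : w ≠ 1) :
    ∑ p ∈ Icc 1 m, w ^ p = 0 := by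
  have hgeom : ∑ p ∈ range m, w ^ p = 0 := by rw [geom_sum_eq hw, hwm, sub_self, zero_div]
  rw [← Ico_add_one_right_eq_Icc, sum_Ico_eq_sum_range, add_tsub_cancel_right]
  simp_rw [pow_add, pow_one, ← mul_sum, hgeom, mul_zero]

theorem sum_Icc_exp_int_mul_div {m : ℕ} {d : ℤ} (hd : d.natAbs < m) :
    ∑ p ∈ Icc 1 m, exp (2 * π * I * d * ((p / m : ℚ) : ℂ)) = if d = 0 then (m : ℂ) else 0 := by
  split_ifs with h0
  · simp [h0]
  have hm : m ≠ 0 := by omega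
  have hζ := isPrimitiveRoot_exp m hm
  set w := exp (2 * π * I / m) ^ d
  have hpow (p : ℕ) : exp (2 * π * I * d * ((p / m : ℚ) : ℂ)) = w ^ p := by
    rw [← zpow_natCast, ← zpow_mul, ← exp_int_mul]
    congr 1
    push_cast
    field_simp
  simp_rw [hpow]
  refine sum_Icc_pow_eq_zero ?_ ?_
  · rw [← zpow_natCast, ← zpow_mul, mul_comm d, zpow_mul, zpow_natCast, hζ.pow_eq_one, one_zpow]
  · rw [Ne, hζ.zpow_eq_one_iff_dvd]
    exact fun hdvd => h0 (Int.eq_zero_of_dvd_of_natAbs_lt_natAbs hdvd (by simpa using hd))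

theorem inner_basisVec_basisVec {l : ℚ} (hl : 0 < l ∧ l ≤ 1) (k k' : ℕ) :
    inner ℂ (basisVec l k) (basisVec l k') = if k = k' then 1 else 0 := by
  classical
  rw [basisVec, basisVec, dif_pos hl, dif_pos hl, lp.inner_single_left, lp.single_apply]
  simp [Pi.single_apply, Prod.ext_iff]

theorem conj_exp_two_pi_I_mul (j j' : ℤ) (l : ℚ) :
    starRingEnd ℂ (exp (2 * π * I * j * l)) * exp (2 * π * I * j' * l)
      = exp (2 * π * I * ((j' - j : ℤ) : ℂ) * l) := by
  rw [← exp_conj, ← Complex.exp_add]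
  congr 1
  simp only [map_mul, map_ofNat, conj_ofReal, conj_I, map_intCast, map_ratCast]
  push_cast
  ring

theorem IsTjk.inner_apply_basisVec {T T' : H2 → H2} {j k j' k' : ℤ} (hT : IsTjk T j k)
    (hT' : IsTjk T' j' k') {l : ℚ} (hl : 0 < l ∧ l ≤ 1) (r : ℕ) :
    inner ℂ (T (basisVec l r)) (T' (basisVec l r))
      = exp (2 * π * I * ((j' - j : ℤ) : ℂ) * l) * if k = k' ∧ 0 ≤ (r : ℤ) + k then 1 else 0 := by
  rcases eq_or_ne k k' with rfl | hkk
  · by_cases hr : 0 ≤ (r : ℤ) + k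
    · rw [hT, hT', if_pos hr, if_pos hr, inner_smul_left, inner_smul_right,
        inner_basisVec_basisVec hl, if_pos rfl, if_pos ⟨rfl, hr⟩, mul_one, mul_one,
        conj_exp_two_pi_I_mul]
    · rw [hT, if_neg hr, inner_zero_left, if_neg fun h => hr h.2, mul_zero]
  · rw [if_neg fun h => hkk h.1, mul_zero, hT, hT']
    split_ifs with hr hr'
    · rw [inner_smul_left, inner_smul_right, inner_basisVec_basisVec hl, if_neg (by omega),
        mul_zero, mul_zero]
    all_goals simp

theorem card_filter_range_nonneg_add (R : ℕ) (k : ℤ) :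
    #{r ∈ range R | 0 ≤ ((r : ℕ) : ℤ) + k} = R - (-k).toNat := by
  rw [← Nat.card_Ico]
  congr 1
  ext r
  simp only [mem_filter, mem_range, mem_Ico]
  omega

theorem div_pos_and_div_le_one_of_mem_Icc {m p : ℕ} (hp : p ∈ Icc 1 m) :
    0 < (p / m : ℚ) ∧ (p / m : ℚ) ≤ 1 := by
  obtain ⟨hp1, hpm⟩ := mem_Icc.1 hp
  have hm : (0 : ℚ) < m := by exact_mod_cast hp1.trans hpm
  exact ⟨by positivity, (div_le_one hm).2 (by exact_mod_cast hpm)⟩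

theorem IsTjk.sum_Bfin_inner {T T' : H2 → H2} {x y : ℤ × ℤ} (hT : IsTjk T x.1 x.2)
    (hT' : IsTjk T' y.1 y.2) {n : ℕ} (hxy : (y.1 - x.1).natAbs < n.sqrt) :
    ∑ pr ∈ Bfin n, inner ℂ (T (bvec n pr)) (T' (bvec n pr))
      = if x = y then (((n.sqrt * (n / n.sqrt - (-x.2).toNat) : ℕ) : ℝ) : ℂ) else 0 := by
  classical
  calc ∑ pr ∈ Bfin n, inner ℂ (T (bvec n pr)) (T' (bvec n pr))
      = ∑ p ∈ Icc 1 n.sqrt, ∑ r ∈ range (n / n.sqrt),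
          exp (2 * π * I * ((y.1 - x.1 : ℤ) : ℂ) * ((p / n.sqrt : ℚ) : ℂ)) *
            if x.2 = y.2 ∧ 0 ≤ (r : ℤ) + x.2 then 1 else 0 := by
        rw [Bfin, sum_product]
        exact sum_congr rfl fun p hp => sum_congr rfl fun r _ =>
          hT.inner_apply_basisVec hT' (div_pos_and_div_le_one_of_mem_Icc hp) r
    _ = (∑ p ∈ Icc 1 n.sqrt,
          exp (2 * π * I * ((y.1 - x.1 : ℤ) : ℂ) * ((p / n.sqrt : ℚ) : ℂ))) *
        ∑ r ∈ range (n / n.sqrt), if x.2 = y.2 ∧ 0 ≤ (r : ℤ) + x.2 then (1 : ℂ) else 0 :=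
        (sum_mul_sum _ _ _ _).symm
    _ = _ := by
        rw [sum_Icc_exp_int_mul_div hxy, sum_boole]
        rcases eq_or_ne x y with rfl | hxy
        · simp [card_filter_range_nonneg_add]
        · obtain hj | hk : x.1 ≠ y.1 ∨ x.2 ≠ y.2 := by
            rwa [Ne, Prod.ext_iff, not_and_or] at hxy
          · simp [hxy, sub_eq_zero, hj.symm]
          · simp [hxy, hk]

end

theorem sum_norm_sum_smul_sq_of_sum_inner {𝕜 E ι κ : Type*} [RCLike 𝕜] [NormedAddCommGroup E]
    [InnerProductSpace 𝕜 E] [DecidableEq ι] {s : Finset ι} {t : Finset κ} (a : ι → 𝕜)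
    {v : ι → κ → E} {g : ι → ℝ}
    (hv : ∀ x ∈ s, ∀ y ∈ s, ∑ i ∈ t, inner 𝕜 (v x i) (v y i) = if x = y then (g x : 𝕜) else 0) :
    ∑ i ∈ t, ‖∑ x ∈ s, a x • v x i‖ ^ 2 = ∑ x ∈ s, ‖a x‖ ^ 2 * g x := by
  apply RCLike.ofReal_injective (K := 𝕜)
  calc ((∑ i ∈ t, ‖∑ x ∈ s, a x • v x i‖ ^ 2 : ℝ) : 𝕜)
      = ∑ i ∈ t, inner 𝕜 (∑ x ∈ s, a x • v x i) (∑ y ∈ s, a y • v y i) := by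
        push_cast
        exact sum_congr rfl fun i _ => (inner_self_eq_norm_sq_to_K _).symm
    _ = ∑ y ∈ s, ∑ x ∈ s, starRingEnd 𝕜 (a x) * a y * ∑ i ∈ t, inner 𝕜 (v x i) (v y i) := by
        simp only [sum_inner, inner_sum, inner_smul_left, inner_smul_right, mul_sum]
        rw [sum_comm]
        exact sum_congr rfl fun y _ => by
          rw [sum_comm]
          exact sum_congr rfl fun x _ => sum_congr rfl fun i _ => by ring
    _ = ∑ y ∈ s, starRingEnd 𝕜 (a y) * a y * g y := by
        refine sum_congr rfl fun y hy => ?_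
        rw [sum_congr rfl fun x hx => congrArg _ (hv x hx y hy)]
        simp [hy]
    _ = _ := by
        push_cast
        simp_rw [RCLike.conj_mul]

theorem Nat.tendsto_sqrt_atTop : Tendsto Nat.sqrt atTop atTop :=
  tendsto_atTop_atTop.2 fun b => ⟨b * b, fun _ hn => Nat.le_sqrt.2 hn⟩

theorem Nat.tendsto_sqrt_div_self : Tendsto (fun n : ℕ => (n.sqrt : ℝ) / n) atTop (nhds 0) := by
  refine squeeze_zero' (Eventually.of_forall fun n => by positivity) ?_
    (tendsto_one_div_atTop_nhds_zero_nat.comp Nat.tendsto_sqrt_atTop)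
  filter_upwards [eventually_ge_atTop 1] with n hn
  have hm : (0 : ℝ) < n.sqrt := by exact_mod_cast Nat.sqrt_pos.2 hn
  have hsq : (n.sqrt : ℝ) * n.sqrt ≤ n := by exact_mod_cast Nat.sqrt_le n
  rw [Function.comp_apply, div_le_div_iff₀ (by positivity) hm]
  nlinarith

/-- `⌊√n⌋ (⌊n / ⌊√n⌋⌋ - c)` differs from `n` by at most `(c + 1) ⌊√n⌋ = o(n)`. -/
theorem tendsto_sqrt_mul_div_sqrt_sub_div (c : ℕ) :
    Tendsto (fun n : ℕ => ((n.sqrt * (n / n.sqrt - c) : ℕ) : ℝ) / n) atTop (nhds 1) := by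
  have hlower : Tendsto (fun n : ℕ => 1 - (c + 1) * ((n.sqrt : ℝ) / n)) atTop (nhds 1) := by
    simpa using (Nat.tendsto_sqrt_div_self.const_mul ((c : ℝ) + 1)).const_sub 1
  refine tendsto_of_tendsto_of_tendsto_of_le_of_le' hlower tendsto_const_nhds ?_ ?_
  all_goals filter_upwards [eventually_ge_atTop 1] with n hn
  all_goals have hn' : (0 : ℝ) < n := by exact_mod_cast hn
  · have hm := Nat.sqrt_pos.2 hn
    have hdiv : n < n.sqrt * (n / n.sqrt) + n.sqrt := by
      have := Nat.div_add_mod n n.sqrt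
      have := Nat.mod_lt n hm
      linarith
    have hsub : n.sqrt * (n / n.sqrt) ≤ n.sqrt * (n / n.sqrt - c) + n.sqrt * c := by
      rw [← mul_add]
      exact Nat.mul_le_mul_left _ (by omega)
    have : (n : ℝ) ≤ ((n.sqrt * (n / n.sqrt - c) : ℕ) : ℝ) + (c + 1) * n.sqrt := by
      have : n ≤ n.sqrt * (n / n.sqrt - c) + (c + 1) * n.sqrt := by linarith
      exact_mod_cast this
    rw [le_div_iff₀ hn']
    field_simp
    linarith
  · rw [div_le_one hn']
    have : n.sqrt * (n / n.sqrt - c) ≤ n :=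
      (Nat.mul_le_mul_left _ (Nat.sub_le _ _)).trans (Nat.mul_div_le n n.sqrt)
    exact_mod_cast this

/-- Parseval-type identity: for a finite linear combination `T = ∑_{(j,k) ∈ s} a_{jk} T_{jk}`,
the `G`-norm satisfies `‖T‖_G² = ∑_{(j,k) ∈ s} |a_{jk}|²`. -/
theorem Gnorm_parseval (s : Finset (ℤ × ℤ)) (a : ℤ × ℤ → ℂ) (Top : ℤ × ℤ → H2 → H2)
    (hTop : ∀ jk ∈ s, IsTjk (Top jk) jk.1 jk.2) :
    Filter.Tendsto
      (fun n : ℕ => (1 / (n : ℝ)) * ∑ pr ∈ Bfin n, ‖∑ jk ∈ s, a jk • Top jk (bvec n pr)‖ ^ 2)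
      atTop (nhds (∑ jk ∈ s, ‖a jk‖ ^ 2)) := by
  classical
  have hfreq : ∀ᶠ n : ℕ in atTop, ∀ x ∈ s, ∀ y ∈ s, (y.1 - x.1).natAbs < n.sqrt := by
    simp only [eventually_all_finset]
    exact fun x _ y _ => Nat.tendsto_sqrt_atTop.eventually_gt_atTop _
  have hsum : ∀ᶠ n : ℕ in atTop,
      (1 / (n : ℝ)) * ∑ pr ∈ Bfin n, ‖∑ jk ∈ s, a jk • Top jk (bvec n pr)‖ ^ 2
        = ∑ jk ∈ s, ‖a jk‖ ^ 2 * (((n.sqrt * (n / n.sqrt - (-jk.2).toNat) : ℕ) : ℝ) / n) := by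
    filter_upwards [hfreq] with n hn
    rw [sum_norm_sum_smul_sq_of_sum_inner a
      (g := fun jk => ((n.sqrt * (n / n.sqrt - (-jk.2).toNat) : ℕ) : ℝ))
      fun x hx y hy => (hTop x hx).sum_Bfin_inner (hTop y hy) (hn x hx y hy), mul_sum]
    exact sum_congr rfl fun jk _ => by ring
  refine Tendsto.congr' (EventuallyEq.symm hsum) ?_
  simpa using tendsto_finsetSum s fun jk _ =>
    (tendsto_sqrt_mul_div_sqrt_sub_div (-jk.2).toNat).const_mul (‖a jk‖ ^ 2)
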